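/- arXiv:2102.02037 — 2 statements merged into one kernel-verified Lean document; each statement's English description precedes it below -/
import Mathlib

section
/- Let 1 < p < ∞ and let E be a separable real Hilbert space with dim E ≥ 2. For a measure μ ∈ W_p(E) the following are equivalent: (i) μ is a Dirac measure; (ii) for every T > 0, every geodesic segment γ : [0,T] → W_p(E) with γ(0) = μ can be extended to a geodesic ray on [0,∞), i.e. there exists γ̃ : [0,∞) → W_p(E) with d_{W_p}(γ̃(s),γ̃(t)) = |s−t| for all s,t ≥ 0 and γ̃(t) = γ(t) for all t ∈ [0,T]. -/
open MeasureTheory ENNReal Topology Filter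
open scoped RealInnerProductSpace

noncomputable section

/-- The `p`-Wasserstein "distance" (valued in `ℝ≥0∞`) between two Borel measures on a
metric space: `(inf over couplings π of ∫ ρ(x,y)^p dπ)^(min (1/p) 1)`. -/
noncomputable def wassersteinDist {X : Type*} [MeasurableSpace X] [PseudoEMetricSpace X]
    (p : ℝ) (μ ν : Measure X) : ℝ≥0∞ :=
  (⨅ π ∈ {π : Measure (X × X) | π.map Prod.fst = μ ∧ π.map Prod.snd = ν},
    ∫⁻ z, edist z.1 z.2 ^ p ∂π) ^ min p⁻¹ 1

/-- Membership in the `p`-Wasserstein space: a Borel probability measure with a finite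
`p`-th moment. -/
def MemWp {X : Type*} [MeasurableSpace X] [PseudoEMetricSpace X] (p : ℝ) (μ : Measure X) : Prop :=
  IsProbabilityMeasure μ ∧ ∃ x₀ : X, ∫⁻ x, edist x x₀ ^ p ∂μ ≠ ⊤

/-!
If `μ = δ x`, a geodesic segment `γ` on `[0, T]` issued from `δ x` is continued past `T` by
pushing `γ T` forward under the homotheties of centre `x` and ratio `t / T`. Every point of the
extended curve is at distance `t` from `δ x`, so the triangle inequality through `δ x` gives the
lower bounds `|s - t|`, and explicit couplings give the upper bounds.

Conversely, if `W_p(δ x, μ) = L > 0`, contracting `μ` towards `x` is a geodesic from `μ` to `δ x`.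
If it extends, its point `ν` at time `L + 1` satisfies `W_p(μ, ν) = W_p(μ, δ x) + W_p(δ x, ν)`.
Test this against the product coupling `μ ⊗ ν`: the triangle inequality through `x` followed by
convexity of `t ↦ t ^ p` bounds `‖y - z‖ ^ p` by a function whose integral is `(L + 1) ^ p`, so
both inequalities are equalities `μ ⊗ ν`-a.e. For `p > 1` strict convexity of `t ↦ t ^ p` and of
the norm then force `y - x = L • (x - z)`. Since `y` and `z` are independent under `μ ⊗ ν`, this
makes `y` constant `μ`-a.e.
-/

section Coupling

variable {X : Type*} [MeasurableSpace X] [PseudoEMetricSpace X] {p : ℝ}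

def couplings (μ ν : Measure X) : Set (Measure (X × X)) :=
  {π | π.map Prod.fst = μ ∧ π.map Prod.snd = ν}

theorem wassersteinDist_comm (μ ν : Measure X) :
    wassersteinDist p μ ν = wassersteinDist p ν μ := by
  suffices h : ∀ μ ν : Measure X, (⨅ π ∈ couplings ν μ, ∫⁻ z, edist z.1 z.2 ^ p ∂π) ≤
      ⨅ π ∈ couplings μ ν, ∫⁻ z, edist z.1 z.2 ^ p ∂π by
    change (⨅ π ∈ couplings μ ν, _) ^ _ = (⨅ π ∈ couplings ν μ, _) ^ _
    rw [le_antisymm (h μ ν) (h ν μ)]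
  intro μ ν
  refine le_iInf₂ fun π hπ => iInf₂_le_of_le (π.map Prod.swap) ⟨?_, ?_⟩ ?_
  · rw [Measure.map_map measurable_fst measurable_swap]
    exact hπ.2
  · rw [Measure.map_map measurable_snd measurable_swap]
    exact hπ.1
  · change ∫⁻ z, _ ∂(π.map (MeasurableEquiv.prodComm : X × X ≃ᵐ X × X)) ≤ _
    rw [lintegral_map_equiv]
    exact le_of_eq (lintegral_congr fun z => by rw [edist_comm]; rfl)

theorem wassersteinDist_eq_biInf (hp : 1 ≤ p) (μ ν : Measure X) :
    wassersteinDist p μ ν = ⨅ π ∈ couplings μ ν, (∫⁻ z, edist z.1 z.2 ^ p ∂π) ^ p⁻¹ := by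
  have hp' : 0 < p⁻¹ := inv_pos.2 (zero_lt_one.trans_le hp)
  rw [wassersteinDist, min_eq_left (inv_le_one_of_one_le₀ hp)]
  let e := ENNReal.orderIsoRpow p⁻¹ hp'
  calc e (⨅ π ∈ couplings μ ν, ∫⁻ z, edist z.1 z.2 ^ p ∂π)
      = ⨅ π ∈ couplings μ ν, e (∫⁻ z, edist z.1 z.2 ^ p ∂π) := by
        simp only [OrderIso.map_iInf]
    _ = _ := rfl

theorem le_wassersteinDist_add (hp : 1 ≤ p) {μ ν : Measure X} {a c : ℝ≥0∞}
    (h : ∀ π ∈ couplings μ ν, c ≤ (∫⁻ z, edist z.1 z.2 ^ p ∂π) ^ p⁻¹ + a) :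
    c ≤ wassersteinDist p μ ν + a := by
  simp only [wassersteinDist_eq_biInf hp, ENNReal.iInf_add]
  exact le_iInf₂ h

variable [OpensMeasurableSpace X]

theorem lintegral_edist_rpow_of_mem_couplings_dirac {x : X} {ν : Measure X}
    {π : Measure (X × X)} (hπ : π ∈ couplings (Measure.dirac x) ν) :
    ∫⁻ z, edist z.1 z.2 ^ p ∂π = ∫⁻ y, edist x y ^ p ∂ν := by
  have hx : ∀ᵐ z ∂π, edist z.1 x = 0 := by
    have hmeas : MeasurableSet {y : X | edist y x = 0} :=
      measurable_edist_left (measurableSet_singleton 0)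
    refine (ae_map_iff measurable_fst.aemeasurable hmeas).1 ?_
    rw [hπ.1, ae_dirac_iff hmeas]
    exact edist_self x
  rw [← hπ.2, lintegral_map (measurable_edist_right.pow_const p) measurable_snd]
  exact lintegral_congr_ae (hx.mono fun z hz => by simp only [edist_congr_right hz])

variable [SecondCountableTopology X]

theorem wassersteinDist_map_map_le (hp : 1 ≤ p) {Ω : Type*} [MeasurableSpace Ω]
    (m : Measure Ω) {f g : Ω → X} (hf : Measurable f) (hg : Measurable g) :
    wassersteinDist p (m.map f) (m.map g) ≤ (∫⁻ ω, edist (f ω) (g ω) ^ p ∂m) ^ p⁻¹ := by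
  rw [wassersteinDist_eq_biInf hp]
  refine iInf₂_le_of_le (m.map fun ω => (f ω, g ω)) ⟨?_, ?_⟩ ?_
  · rw [Measure.map_map measurable_fst (hf.prodMk hg)]; rfl
  · rw [Measure.map_map measurable_snd (hf.prodMk hg)]; rfl
  · rw [lintegral_map (measurable_edist.pow_const p) (hf.prodMk hg)]

theorem lintegral_edist_rpow_inv_le_add (hp : 1 ≤ p) {Ω : Type*} [MeasurableSpace Ω]
    (m : Measure Ω) {f g h : Ω → X} (hf : Measurable f) (hg : Measurable g)
    (hh : Measurable h) :
    (∫⁻ ω, edist (f ω) (h ω) ^ p ∂m) ^ p⁻¹ ≤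
      (∫⁻ ω, edist (f ω) (g ω) ^ p ∂m) ^ p⁻¹ + (∫⁻ ω, edist (g ω) (h ω) ^ p ∂m) ^ p⁻¹ := by
  have hp0 : 0 < p := zero_lt_one.trans_le hp
  calc (∫⁻ ω, edist (f ω) (h ω) ^ p ∂m) ^ p⁻¹
      ≤ (∫⁻ ω, (edist (f ω) (g ω) + edist (g ω) (h ω)) ^ p ∂m) ^ p⁻¹ := by
        gcongr with ω
        exact edist_triangle _ _ _
    _ ≤ _ := by
        simpa only [one_div, Pi.add_apply] using ENNReal.lintegral_Lp_add_le (μ := m)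
          (f := fun ω => edist (f ω) (g ω)) (g := fun ω => edist (g ω) (h ω))
          (hf.edist hg).aemeasurable (hg.edist hh).aemeasurable hp

theorem wassersteinDist_dirac_left (hp : 1 ≤ p) (x : X) (ν : Measure X)
    [IsProbabilityMeasure ν] :
    wassersteinDist p (Measure.dirac x) ν = (∫⁻ y, edist x y ^ p ∂ν) ^ p⁻¹ := by
  refine le_antisymm ?_ ?_
  · simpa using wassersteinDist_map_map_le hp ν measurable_const measurable_id (f := fun _ => x)
  · simpa using le_wassersteinDist_add hp (a := 0) fun π hπ => by
      rw [lintegral_edist_rpow_of_mem_couplings_dirac hπ, add_zero]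

theorem wassersteinDist_dirac_left_rpow (hp : 1 ≤ p) (x : X) (ν : Measure X)
    [IsProbabilityMeasure ν] :
    wassersteinDist p (Measure.dirac x) ν ^ p = ∫⁻ y, edist x y ^ p ∂ν := by
  rw [wassersteinDist_dirac_left hp, ENNReal.rpow_inv_rpow (zero_lt_one.trans_le hp).ne']

theorem wassersteinDist_dirac_le_add (hp : 1 ≤ p) (x : X) (α β : Measure X)
    [IsProbabilityMeasure α] [IsProbabilityMeasure β] :
    wassersteinDist p (Measure.dirac x) β ≤
      wassersteinDist p (Measure.dirac x) α + wassersteinDist p α β := by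
  rw [add_comm]
  refine le_wassersteinDist_add hp fun π hπ => ?_
  rw [wassersteinDist_dirac_left hp, wassersteinDist_dirac_left hp, ← hπ.1, ← hπ.2,
    lintegral_map (measurable_edist_right.pow_const p) measurable_fst,
    lintegral_map (measurable_edist_right.pow_const p) measurable_snd, add_comm]
  exact lintegral_edist_rpow_inv_le_add hp π measurable_const measurable_fst measurable_snd

theorem wassersteinDist_map_le (hp : 1 ≤ p) (α β : Measure X) {φ : X → X}
    (hφ : Measurable φ) :
    wassersteinDist p α (β.map φ) ≤
      wassersteinDist p α β + (∫⁻ y, edist y (φ y) ^ p ∂β) ^ p⁻¹ := by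
  refine le_wassersteinDist_add hp fun π hπ => ?_
  have hφπ : β.map φ = π.map (φ ∘ Prod.snd) := by
    rw [← hπ.2, Measure.map_map hφ measurable_snd]
  rw [hφπ, ← hπ.1, ← hπ.2,
    lintegral_map (f := fun y => edist y (φ y) ^ p) ((measurable_id.edist hφ).pow_const p)
      measurable_snd]
  exact (wassersteinDist_map_map_le hp π measurable_fst (hφ.comp measurable_snd)).trans
    (lintegral_edist_rpow_inv_le_add hp π measurable_fst measurable_snd
      (hφ.comp measurable_snd))

theorem memWp_iff_exists_wassersteinDist_dirac_ne_top (hp : 1 ≤ p) (ν : Measure X)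
    [IsProbabilityMeasure ν] :
    MemWp p ν ↔ ∃ x, wassersteinDist p (Measure.dirac x) ν ≠ ⊤ := by
  have hp' : 0 < p⁻¹ := inv_pos.2 (zero_lt_one.trans_le hp)
  simp only [MemWp, wassersteinDist_dirac_left hp, ne_eq, ENNReal.rpow_eq_top_iff_of_pos hp',
    edist_comm]
  exact and_iff_right inferInstance

def IsWassersteinGeodesicOn (p : ℝ) (γ : ℝ → Measure X) (S : Set ℝ) : Prop :=
  ∀ s ∈ S, ∀ t ∈ S, wassersteinDist p (γ s) (γ t) = ENNReal.ofReal |s - t|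

theorem isWassersteinGeodesicOn_Ici_of_dirac (hp : 1 ≤ p) (x : X) {γ : ℝ → Measure X}
    (hprob : ∀ t, 0 ≤ t → IsProbabilityMeasure (γ t))
    (hdirac : ∀ t, 0 ≤ t → wassersteinDist p (Measure.dirac x) (γ t) = ENNReal.ofReal t)
    (hle : ∀ s t, 0 ≤ s → s ≤ t → wassersteinDist p (γ s) (γ t) ≤ ENNReal.ofReal (t - s)) :
    IsWassersteinGeodesicOn p γ (Set.Ici 0) := by
  have key : ∀ s t, 0 ≤ s → s ≤ t → wassersteinDist p (γ s) (γ t) = ENNReal.ofReal |s - t| := by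
    intro s t hs hst
    rw [abs_sub_comm, abs_of_nonneg (sub_nonneg.2 hst)]
    refine le_antisymm (hle s t hs hst) ?_
    have := hprob s hs
    have := hprob t (hs.trans hst)
    have htri := wassersteinDist_dirac_le_add hp x (γ s) (γ t)
    rw [hdirac s hs, hdirac t (hs.trans hst)] at htri
    rw [ENNReal.ofReal_sub _ hs]
    exact tsub_le_iff_left.2 htri
  intro s hs t ht
  rcases le_total s t with hst | hts
  · exact key s t hs hst
  · rw [wassersteinDist_comm, abs_sub_comm]
    exact key t s ht hts

end Coupling

theorem ENNReal.ofReal_abs_div_mul {R : ℝ} (hR : 0 < R) (a : ℝ) :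
    ENNReal.ofReal |a / R| * ENNReal.ofReal R = ENNReal.ofReal |a| := by
  rw [← ENNReal.ofReal_mul (abs_nonneg _), abs_div, abs_of_pos hR, div_mul_cancel₀ _ hR.ne']

section Homothety

open AffineMap

variable {E : Type*} [NormedAddCommGroup E] [NormedSpace ℝ E]

theorem edist_homothety_homothety (x y : E) (a b : ℝ) :
    edist (homothety x a y) (homothety x b y) = ENNReal.ofReal |a - b| * edist x y := by
  rw [homothety_eq_lineMap, homothety_eq_lineMap, edist_dist, edist_dist, dist_lineMap_lineMap,
    Real.dist_eq, ENNReal.ofReal_mul (abs_nonneg _)]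

variable [MeasurableSpace E] [BorelSpace E] {p : ℝ}

theorem lintegral_edist_homothety_rpow_inv (hp : 0 < p) (x : E) (a b : ℝ) (β : Measure E) :
    (∫⁻ y, edist (homothety x a y) (homothety x b y) ^ p ∂β) ^ p⁻¹ =
      ENNReal.ofReal |a - b| * (∫⁻ y, edist x y ^ p ∂β) ^ p⁻¹ := by
  simp_rw [edist_homothety_homothety, ENNReal.mul_rpow_of_nonneg _ _ hp.le]
  rw [lintegral_const_mul _ (measurable_edist_right.pow_const p),
    ENNReal.mul_rpow_of_nonneg _ _ (inv_nonneg.2 hp.le), ENNReal.rpow_rpow_inv hp.ne']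

theorem measurable_homothety (x : E) (c : ℝ) : Measurable (homothety x c) :=
  (homothety_continuous x c).measurable

variable [SecondCountableTopology E]

theorem wassersteinDist_dirac_map_homothety (hp : 1 ≤ p) (x : E) (c : ℝ) (β : Measure E)
    [IsProbabilityMeasure β] :
    wassersteinDist p (Measure.dirac x) (β.map (homothety x c)) =
      ENNReal.ofReal |c| * wassersteinDist p (Measure.dirac x) β := by
  have : IsProbabilityMeasure (β.map (homothety x c)) :=
    Measure.isProbabilityMeasure_map (measurable_homothety x c).aemeasurable
  rw [wassersteinDist_dirac_left hp, wassersteinDist_dirac_left hp,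
    lintegral_map (measurable_edist_right.pow_const p) (measurable_homothety x c)]
  simpa using lintegral_edist_homothety_rpow_inv (zero_lt_one.trans_le hp) x 0 c β

theorem wassersteinDist_map_homothety_map_homothety_le (hp : 1 ≤ p) (x : E) (a b : ℝ)
    (β : Measure E) [IsProbabilityMeasure β] :
    wassersteinDist p (β.map (homothety x a)) (β.map (homothety x b)) ≤
      ENNReal.ofReal |a - b| * wassersteinDist p (Measure.dirac x) β := by
  rw [wassersteinDist_dirac_left hp,
    ← lintegral_edist_homothety_rpow_inv (zero_lt_one.trans_le hp)]
  exact wassersteinDist_map_map_le hp β (measurable_homothety x a) (measurable_homothety x b)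

theorem wassersteinDist_map_homothety_le (hp : 1 ≤ p) (α β : Measure E)
    [IsProbabilityMeasure β] (x : E) (c : ℝ) :
    wassersteinDist p α (β.map (homothety x c)) ≤
      wassersteinDist p α β + ENNReal.ofReal |1 - c| * wassersteinDist p (Measure.dirac x) β := by
  refine (wassersteinDist_map_le hp α β (measurable_homothety x c)).trans_eq ?_
  rw [wassersteinDist_dirac_left hp]
  congr 1
  simpa using lintegral_edist_homothety_rpow_inv (zero_lt_one.trans_le hp) x 1 c β

theorem wassersteinDist_dirac_map_homothety_div (hp : 1 ≤ p) {x : E} {β : Measure E}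
    [IsProbabilityMeasure β] {R : ℝ} (hR : 0 < R)
    (hβ : wassersteinDist p (Measure.dirac x) β = ENNReal.ofReal R) {t : ℝ} (ht : 0 ≤ t) :
    wassersteinDist p (Measure.dirac x) (β.map (homothety x (t / R))) = ENNReal.ofReal t := by
  rw [wassersteinDist_dirac_map_homothety hp, hβ, ENNReal.ofReal_abs_div_mul hR, abs_of_nonneg ht]

theorem isWassersteinGeodesicOn_map_homothety (hp : 1 ≤ p) {x : E} {β : Measure E}
    [IsProbabilityMeasure β] {R : ℝ} (hR : 0 < R)
    (hβ : wassersteinDist p (Measure.dirac x) β = ENNReal.ofReal R) :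
    IsWassersteinGeodesicOn p (fun t => β.map (homothety x (t / R))) (Set.Ici 0) := by
  refine isWassersteinGeodesicOn_Ici_of_dirac hp x
    (fun t _ => Measure.isProbabilityMeasure_map (measurable_homothety x _).aemeasurable)
    (fun t ht => wassersteinDist_dirac_map_homothety_div hp hR hβ ht) fun s t _ hst => ?_
  refine (wassersteinDist_map_homothety_map_homothety_le hp x _ _ β).trans_eq ?_
  rw [hβ, ← sub_div, ENNReal.ofReal_abs_div_mul hR, abs_sub_comm, abs_of_nonneg (sub_nonneg.2 hst)]

theorem isWassersteinGeodesicOn_map_homothety_segment (hp : 1 ≤ p) {x : E} {μ : Measure E}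
    [IsProbabilityMeasure μ] {L : ℝ} (hL : 0 < L)
    (hμ : wassersteinDist p (Measure.dirac x) μ = ENNReal.ofReal L) :
    IsWassersteinGeodesicOn p (fun t => μ.map (homothety x ((L - t) / L))) (Set.Icc 0 L) := by
  intro s hs t ht
  have := isWassersteinGeodesicOn_map_homothety hp hL hμ (L - s) (sub_nonneg.2 hs.2) (L - t)
    (sub_nonneg.2 ht.2)
  rwa [show L - s - (L - t) = t - s by ring, abs_sub_comm] at this

theorem memWp_map_homothety (hp : 1 ≤ p) {x : E} {β : Measure E} [IsProbabilityMeasure β]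
    (hβ : wassersteinDist p (Measure.dirac x) β ≠ ⊤) (c : ℝ) :
    MemWp p (β.map (homothety x c)) := by
  have : IsProbabilityMeasure (β.map (homothety x c)) :=
    Measure.isProbabilityMeasure_map (measurable_homothety x c).aemeasurable
  refine (memWp_iff_exists_wassersteinDist_dirac_ne_top hp _).2 ⟨x, ?_⟩
  rw [wassersteinDist_dirac_map_homothety hp]
  exact ENNReal.mul_ne_top ENNReal.ofReal_ne_top hβ

end Homothety

theorem MeasureTheory.Measure.eq_dirac_of_ae_eq {α : Type*} [MeasurableSpace α]
    {μ : Measure α} [IsProbabilityMeasure μ] {x : α} (h : ∀ᵐ y ∂μ, y = x) :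
    μ = Measure.dirac x :=
  calc μ = μ.map id := Measure.map_id.symm
    _ = μ.map fun _ => x := Measure.map_congr h
    _ = Measure.dirac x := by simp [Measure.map_const]

theorem exists_ae_eq_of_ae_prod_eq {α β γ : Type*} [MeasurableSpace α] [MeasurableSpace β]
    {μ : Measure α} {ν : Measure β} [NeZero μ] [NeZero ν] [SFinite ν] {f : α → γ} {g : β → γ}
    (h : ∀ᵐ z ∂μ.prod ν, f z.1 = g z.2) : ∃ c, ∀ᵐ y ∂μ, f y = c := by
  have h' := Measure.ae_ae_of_ae_prod h
  obtain ⟨y₀, hy₀⟩ := h'.exists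
  refine ⟨f y₀, h'.mono fun y hy => ?_⟩
  obtain ⟨z, hz, hz₀⟩ := (hy.and hy₀).exists
  exact hz.trans hz₀.symm

theorem eq_dirac_of_wassersteinDist_dirac_eq_zero {X : Type*} [MeasurableSpace X] [EMetricSpace X]
    [OpensMeasurableSpace X] [SecondCountableTopology X] {p : ℝ} (hp : 1 ≤ p) {x : X}
    {μ : Measure X} [IsProbabilityMeasure μ] (h : wassersteinDist p (Measure.dirac x) μ = 0) :
    μ = Measure.dirac x := by
  have hp0 : 0 < p := zero_lt_one.trans_le hp
  have h0 : ∫⁻ y, edist x y ^ p ∂μ = 0 := by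
    rw [← wassersteinDist_dirac_left_rpow hp, h, ENNReal.zero_rpow_of_pos hp0]
  rw [lintegral_eq_zero_iff (measurable_edist_right.pow_const p)] at h0
  refine Measure.eq_dirac_of_ae_eq (h0.mono fun y hy => ?_)
  rw [Pi.zero_apply, ENNReal.rpow_eq_zero_iff_of_pos hp0, edist_eq_zero] at hy
  exact hy.symm

theorem eq_smul_of_norm_add_eq_add_of_norm_eq_mul {F : Type*} [NormedAddCommGroup F]
    [NormedSpace ℝ F] [StrictConvexSpace ℝ F] {u v : F} {c : ℝ}
    (h : ‖u + v‖ = ‖u‖ + ‖v‖) (huv : ‖u‖ = c * ‖v‖) : u = c • v := by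
  have hray := (sameRay_iff_norm_add.2 h).norm_smul_eq
  rcases eq_or_ne v 0 with rfl | hv
  · simpa using huv
  · rw [huv, mul_smul, smul_comm] at hray
    exact (smul_right_injective F (norm_ne_zero_iff.2 hv) hray).symm

/-- Convexity bound on `(u + v) ^ p`, from `u + v = θ (u / θ) + (1 - θ) (v / (1 - θ))`. -/
def convexSplit (p θ u v : ℝ) : ℝ :=
  θ * (θ⁻¹ * u) ^ p + (1 - θ) * ((1 - θ)⁻¹ * v) ^ p

section ConvexSplit

variable {p θ u v : ℝ}

theorem add_rpow_le_convexSplit (hp : 1 ≤ p) (hθ0 : 0 < θ) (hθ1 : θ < 1) (hu : 0 ≤ u)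
    (hv : 0 ≤ v) : (u + v) ^ p ≤ convexSplit p θ u v := by
  have h1θ : 0 < 1 - θ := sub_pos.2 hθ1
  have := (convexOn_rpow hp).2 (Set.mem_Ici.2 (mul_nonneg (inv_nonneg.2 hθ0.le) hu))
    (Set.mem_Ici.2 (mul_nonneg (inv_nonneg.2 h1θ.le) hv)) hθ0.le h1θ.le (by ring)
  simpa [convexSplit, ← mul_assoc, hθ0.ne', h1θ.ne'] using this

theorem add_rpow_lt_convexSplit (hp : 1 < p) (hθ0 : 0 < θ) (hθ1 : θ < 1) (hu : 0 ≤ u)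
    (hv : 0 ≤ v) (huv : θ⁻¹ * u ≠ (1 - θ)⁻¹ * v) : (u + v) ^ p < convexSplit p θ u v := by
  have h1θ : 0 < 1 - θ := sub_pos.2 hθ1
  have := (strictConvexOn_rpow hp).2 (Set.mem_Ici.2 (mul_nonneg (inv_nonneg.2 hθ0.le) hu))
    (Set.mem_Ici.2 (mul_nonneg (inv_nonneg.2 h1θ.le) hv)) huv hθ0 h1θ (by ring)
  simpa [convexSplit, ← mul_assoc, hθ0.ne', h1θ.ne'] using this

theorem ofReal_convexSplit (hp : 0 ≤ p) (hθ0 : 0 < θ) (hθ1 : θ < 1) (hu : 0 ≤ u)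
    (hv : 0 ≤ v) :
    ENNReal.ofReal (convexSplit p θ u v) =
      ENNReal.ofReal θ * (ENNReal.ofReal θ⁻¹ * ENNReal.ofReal u) ^ p +
        ENNReal.ofReal (1 - θ) * (ENNReal.ofReal (1 - θ)⁻¹ * ENNReal.ofReal v) ^ p := by
  have h1θ : 0 < 1 - θ := sub_pos.2 hθ1
  rw [← ENNReal.ofReal_mul (inv_nonneg.2 hθ0.le), ← ENNReal.ofReal_mul (inv_nonneg.2 h1θ.le),
    ENNReal.ofReal_rpow_of_nonneg (by positivity) hp,
    ENNReal.ofReal_rpow_of_nonneg (by positivity) hp, ← ENNReal.ofReal_mul hθ0.le,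
    ← ENNReal.ofReal_mul h1θ.le, ← ENNReal.ofReal_add (by positivity) (by positivity), convexSplit]

theorem lintegral_ofReal_convexSplit {X : Type*} [PseudoMetricSpace X] [MeasurableSpace X]
    [OpensMeasurableSpace X] (hp : 0 ≤ p) (hθ0 : 0 < θ) (hθ1 : θ < 1) {s : ℝ}
    {x : X} {μ ν : Measure X} [IsProbabilityMeasure μ] [IsProbabilityMeasure ν]
    (hμ : ∫⁻ y, edist x y ^ p ∂μ = ENNReal.ofReal (θ * s) ^ p)
    (hν : ∫⁻ y, edist x y ^ p ∂ν = ENNReal.ofReal ((1 - θ) * s) ^ p) :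
    ∫⁻ z, ENNReal.ofReal (convexSplit p θ (dist x z.1) (dist x z.2)) ∂(μ.prod ν) =
      ENNReal.ofReal s ^ p := by
  have h1θ : 0 < 1 - θ := sub_pos.2 hθ1
  have hmarg : ∀ (f : X → ℝ≥0∞), Measurable f →
      (∫⁻ z, f z.1 ∂(μ.prod ν)) = ∫⁻ y, f y ∂μ ∧ (∫⁻ z, f z.2 ∂(μ.prod ν)) = ∫⁻ y, f y ∂ν :=
    fun f hf => ⟨by rw [← lintegral_map hf measurable_fst, Measure.map_fst_prod]; simp,
      by rw [← lintegral_map hf measurable_snd, Measure.map_snd_prod]; simp⟩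
  have hm : Measurable fun y => edist x y ^ p := measurable_edist_right.pow_const p
  have hm₁ : Measurable fun z : X × X => edist x z.1 ^ p := hm.comp measurable_fst
  have hm₂ : Measurable fun z : X × X => edist x z.2 ^ p := hm.comp measurable_snd
  simp_rw [ofReal_convexSplit hp hθ0 hθ1 dist_nonneg dist_nonneg, ← edist_dist,
    ENNReal.mul_rpow_of_nonneg _ _ hp]
  rw [lintegral_add_left ((hm₁.const_mul _).const_mul _),
    lintegral_const_mul _ (hm₁.const_mul _), lintegral_const_mul _ hm₁,
    lintegral_const_mul _ (hm₂.const_mul _), lintegral_const_mul _ hm₂, (hmarg _ hm).1,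
    (hmarg _ hm).2, hμ, hν,
    ← ENNReal.mul_rpow_of_nonneg _ _ hp, ← ENNReal.mul_rpow_of_nonneg _ _ hp,
    ← ENNReal.ofReal_mul (inv_nonneg.2 hθ0.le), ← ENNReal.ofReal_mul (inv_nonneg.2 h1θ.le),
    inv_mul_cancel_left₀ hθ0.ne', inv_mul_cancel_left₀ h1θ.ne', ← add_mul,
    ← ENNReal.ofReal_add hθ0.le h1θ.le, add_sub_cancel, ENNReal.ofReal_one, one_mul]

theorem edist_rpow_le_ofReal_convexSplit {X : Type*} [PseudoMetricSpace X] (hp : 1 ≤ p)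
    (hθ0 : 0 < θ) (hθ1 : θ < 1) (x y z : X) :
    edist y z ^ p ≤ ENNReal.ofReal (convexSplit p θ (dist x y) (dist x z)) := by
  rw [edist_dist, ENNReal.ofReal_rpow_of_nonneg dist_nonneg (zero_le_one.trans hp)]
  refine ENNReal.ofReal_le_ofReal ((Real.rpow_le_rpow dist_nonneg ?_ (zero_le_one.trans hp)).trans
    (add_rpow_le_convexSplit hp hθ0 hθ1 dist_nonneg dist_nonneg))
  exact dist_comm y x ▸ dist_triangle y x z

variable {E : Type*} [NormedAddCommGroup E] [NormedSpace ℝ E] [StrictConvexSpace ℝ E]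

theorem eq_add_smul_of_convexSplit_le (hp : 1 < p) (hθ0 : 0 < θ) (hθ1 : θ < 1) {x y z : E}
    (h : ENNReal.ofReal (convexSplit p θ (dist x y) (dist x z)) ≤ edist y z ^ p) :
    y = x + (θ / (1 - θ)) • (x - z) := by
  have hp0 : 0 < p := zero_lt_one.trans hp
  have h1θ : 0 < 1 - θ := sub_pos.2 hθ1
  rw [edist_dist, ENNReal.ofReal_rpow_of_nonneg dist_nonneg hp0.le,
    ENNReal.ofReal_le_ofReal_iff (by positivity)] at h
  have htri : dist y z ≤ dist x y + dist x z := dist_comm y x ▸ dist_triangle y x z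
  have hd : dist y z = dist x y + dist x z := le_antisymm htri <|
    (Real.rpow_le_rpow_iff (by positivity) dist_nonneg hp0).1 <|
      (add_rpow_le_convexSplit hp.le hθ0 hθ1 dist_nonneg dist_nonneg).trans h
  have hprop : θ⁻¹ * dist x y = (1 - θ)⁻¹ * dist x z := by
    by_contra hne
    exact (add_rpow_lt_convexSplit hp hθ0 hθ1 dist_nonneg dist_nonneg hne).not_ge
      (hd ▸ h)
  have hline := eq_smul_of_norm_add_eq_add_of_norm_eq_mul (u := y - x) (v := x - z)
    (c := θ / (1 - θ)) ?_ ?_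
  · rw [← hline]; abel
  · rwa [sub_add_sub_cancel, ← dist_eq_norm, ← dist_eq_norm, ← dist_eq_norm, dist_comm y x]
  · rw [← dist_eq_norm, ← dist_eq_norm, dist_comm y x]
    field_simp at hprop ⊢
    linarith

end ConvexSplit

section Rigidity

open Set

variable {E : Type*} [NormedAddCommGroup E] [NormedSpace ℝ E] [StrictConvexSpace ℝ E]
  [MeasurableSpace E] [BorelSpace E] [SecondCountableTopology E] {p : ℝ}

theorem exists_eq_dirac_of_wassersteinDist_eq_add (hp : 1 < p) {x : E} {μ ν : Measure E}
    [IsProbabilityMeasure μ] [IsProbabilityMeasure ν] {a b : ℝ} (ha : 0 < a) (hb : 0 < b)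
    (hμ : wassersteinDist p (Measure.dirac x) μ = ENNReal.ofReal a)
    (hν : wassersteinDist p (Measure.dirac x) ν = ENNReal.ofReal b)
    (hμν : ENNReal.ofReal (a + b) ≤ wassersteinDist p μ ν) : ∃ y, μ = Measure.dirac y := by
  have hp0 : 0 < p := zero_lt_one.trans hp
  set θ := a / (a + b)
  have hθ0 : 0 < θ := by positivity
  have hθ1 : θ < 1 := (div_lt_one (by positivity)).2 (by linarith)
  have hθa : θ * (a + b) = a := div_mul_cancel₀ _ (by positivity)
  have hθb : (1 - θ) * (a + b) = b := by rw [sub_mul, one_mul, hθa]; ring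
  set G : E × E → ℝ≥0∞ := fun z => ENNReal.ofReal (convexSplit p θ (dist x z.1) (dist x z.2))
  have hG : ∫⁻ z, G z ∂(μ.prod ν) = ENNReal.ofReal (a + b) ^ p :=
    lintegral_ofReal_convexSplit hp0.le hθ0 hθ1
      (by rw [hθa, ← hμ, wassersteinDist_dirac_left_rpow hp.le])
      (by rw [hθb, ← hν, wassersteinDist_dirac_left_rpow hp.le])
  -- the product coupling is optimal, so the pointwise bound is an a.e. equality
  have hlow : ENNReal.ofReal (a + b) ^ p ≤ ∫⁻ z, edist z.1 z.2 ^ p ∂(μ.prod ν) := by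
    rw [← ENNReal.le_rpow_inv_iff hp0]
    refine hμν.trans ?_
    simpa using wassersteinDist_map_map_le hp.le (μ.prod ν) measurable_fst measurable_snd
  have hGmeas : Measurable G := by
    simp only [G, convexSplit]
    fun_prop
  have hae : ∀ᵐ z ∂(μ.prod ν), edist z.1 z.2 ^ p = G z :=
    ae_eq_of_ae_le_of_lintegral_le
      (ae_of_all _ fun z => edist_rpow_le_ofReal_convexSplit hp.le hθ0 hθ1 x z.1 z.2)
      (ne_top_of_le_ne_top (hG ▸ ENNReal.rpow_ne_top_of_nonneg hp0.le ENNReal.ofReal_ne_top)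
        (lintegral_mono fun z => edist_rpow_le_ofReal_convexSplit hp.le hθ0 hθ1 x z.1 z.2))
      hGmeas.aemeasurable (hG ▸ hlow)
  obtain ⟨y, hy⟩ := exists_ae_eq_of_ae_prod_eq (f := id)
    (g := fun z => x + (θ / (1 - θ)) • (x - z))
    (hae.mono fun z hz => eq_add_smul_of_convexSplit_le hp hθ0 hθ1 hz.ge)
  exact ⟨y, Measure.eq_dirac_of_ae_eq hy⟩

theorem exists_eq_dirac_of_isWassersteinGeodesicOn_Ici (hp : 1 < p) {γ : ℝ → Measure E}
    (hprob : ∀ t, 0 ≤ t → IsProbabilityMeasure (γ t))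
    (hgeo : IsWassersteinGeodesicOn p γ (Ici 0)) {L : ℝ} (hL : 0 < L) {x : E}
    (hx : γ L = Measure.dirac x) : ∃ y, γ 0 = Measure.dirac y := by
  have h0 : (0 : ℝ) ∈ Ici 0 := mem_Ici.2 le_rfl
  have hL1 : L + 1 ∈ Ici 0 := mem_Ici.2 (by linarith)
  have := hprob 0 h0
  have := hprob (L + 1) hL1
  refine exists_eq_dirac_of_wassersteinDist_eq_add hp hL one_pos (x := x) (ν := γ (L + 1)) ?_ ?_ ?_
  · rw [← hx, hgeo L hL.le 0 h0, sub_zero, abs_of_pos hL]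
  · rw [← hx, hgeo L hL.le (L + 1) hL1, sub_add_cancel_left, abs_neg, abs_one]
  · rw [hgeo 0 h0 (L + 1) hL1, zero_sub, abs_neg, abs_of_pos (by linarith), add_comm]

end Rigidity

section Extension

open AffineMap Set

variable {E : Type*} [NormedAddCommGroup E] [NormedSpace ℝ E] [MeasurableSpace E] [BorelSpace E]
  [SecondCountableTopology E] {p : ℝ}

theorem wassersteinDist_map_homothety_div_le (hp : 1 ≤ p) {x : E} {α β : Measure E}
    [IsProbabilityMeasure β] {s T t : ℝ} (hT : 0 < T) (hsT : s ≤ T) (hTt : T ≤ t)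
    (hα : wassersteinDist p α β = ENNReal.ofReal (T - s))
    (hβ : wassersteinDist p (Measure.dirac x) β = ENNReal.ofReal T) :
    wassersteinDist p α (β.map (homothety x (t / T))) ≤ ENNReal.ofReal (t - s) := by
  refine (wassersteinDist_map_homothety_le hp α β x _).trans_eq ?_
  rw [hα, hβ, one_sub_div hT.ne', ENNReal.ofReal_abs_div_mul hT, abs_sub_comm,
    abs_of_nonneg (sub_nonneg.2 hTt), ← ENNReal.ofReal_add (by linarith) (by linarith)]
  ring_nf

theorem exists_ray_extension_of_dirac (hp : 1 ≤ p) {x : E} {T : ℝ} (hT : 0 < T)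
    {γ : ℝ → Measure E} (hmem : ∀ t ∈ Icc 0 T, MemWp p (γ t)) (hγ0 : γ 0 = Measure.dirac x)
    (hgeo : IsWassersteinGeodesicOn p γ (Icc 0 T)) :
    ∃ γ' : ℝ → Measure E, (∀ t, 0 ≤ t → MemWp p (γ' t)) ∧
      IsWassersteinGeodesicOn p γ' (Ici 0) ∧ EqOn γ' γ (Icc 0 T) := by
  have hT' : T ∈ Icc 0 T := ⟨hT.le, le_rfl⟩
  have : IsProbabilityMeasure (γ T) := (hmem T hT').1
  have hdirac : ∀ t ∈ Icc 0 T, wassersteinDist p (Measure.dirac x) (γ t) = ENNReal.ofReal t :=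
    fun t ht => by rw [← hγ0, hgeo 0 ⟨le_rfl, hT.le⟩ t ht, zero_sub, abs_neg, abs_of_nonneg ht.1]
  set ray : ℝ → Measure E := fun t => (γ T).map (homothety x (t / T))
  have hray := isWassersteinGeodesicOn_map_homothety hp hT (hdirac T hT')
  set γ' : ℝ → Measure E := fun t => if t ≤ T then γ t else ray t
  have hprob : ∀ t, 0 ≤ t → IsProbabilityMeasure (γ' t) := fun t ht => by
    by_cases htT : t ≤ T
    · simpa [γ', htT] using (hmem t ⟨ht, htT⟩).1
    · simpa [γ', htT, ray] using
        Measure.isProbabilityMeasure_map (measurable_homothety x (t / T)).aemeasurable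
  have hdirac' : ∀ t, 0 ≤ t → wassersteinDist p (Measure.dirac x) (γ' t) = ENNReal.ofReal t :=
    fun t ht => by
      by_cases htT : t ≤ T
      · simpa [γ', htT] using hdirac t ⟨ht, htT⟩
      · simpa [γ', htT, ray] using wassersteinDist_dirac_map_homothety_div hp hT (hdirac T hT') ht
  have hle : ∀ s t, 0 ≤ s → s ≤ t → wassersteinDist p (γ' s) (γ' t) ≤ ENNReal.ofReal (t - s) := by
    intro s t hs hst
    by_cases htT : t ≤ T
    · simp only [γ', htT, hst.trans htT, if_true]
      rw [hgeo s ⟨hs, hst.trans htT⟩ t ⟨hs.trans hst, htT⟩, abs_sub_comm,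
        abs_of_nonneg (sub_nonneg.2 hst)]
    by_cases hsT : s ≤ T
    · simp only [γ', htT, hsT, if_true, if_false, ray]
      refine wassersteinDist_map_homothety_div_le hp hT hsT (le_of_not_ge htT) ?_ (hdirac T hT')
      rw [hgeo s ⟨hs, hsT⟩ T hT', abs_sub_comm, abs_of_nonneg (sub_nonneg.2 hsT)]
    · simp only [γ', htT, hsT, if_false]
      rw [hray s hs t (hs.trans hst), abs_sub_comm, abs_of_nonneg (sub_nonneg.2 hst)]
  refine ⟨γ', fun t ht => ?_, isWassersteinGeodesicOn_Ici_of_dirac hp x hprob hdirac' hle,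
    fun t ht => if_pos ht.2⟩
  have := hprob t ht
  exact (memWp_iff_exists_wassersteinDist_dirac_ne_top hp _).2
    ⟨x, hdirac' t ht ▸ ENNReal.ofReal_ne_top⟩

end Extension

theorem dirac_iff_geodesics_extend_general
    {E : Type*} [NormedAddCommGroup E] [InnerProductSpace ℝ E]
    [SecondCountableTopology E] [MeasurableSpace E] [BorelSpace E]
    (p : ℝ) (hp1 : 1 < p)
    (μ : Measure E) (hμ : MemWp p μ) :
    (∃ x : E, μ = Measure.dirac x) ↔
      (∀ T : ℝ, 0 < T → ∀ γ : ℝ → Measure E,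
        (∀ t ∈ Set.Icc (0:ℝ) T, MemWp p (γ t)) →
        γ 0 = μ →
        (∀ s ∈ Set.Icc (0:ℝ) T, ∀ t ∈ Set.Icc (0:ℝ) T,
          wassersteinDist p (γ s) (γ t) = ENNReal.ofReal |s - t|) →
        ∃ γ' : ℝ → Measure E,
          (∀ t : ℝ, 0 ≤ t → MemWp p (γ' t)) ∧
          (∀ s : ℝ, 0 ≤ s → ∀ t : ℝ, 0 ≤ t →
            wassersteinDist p (γ' s) (γ' t) = ENNReal.ofReal |s - t|) ∧
          (∀ t ∈ Set.Icc (0:ℝ) T, γ' t = γ t)) := by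
  refine ⟨fun ⟨x, hx⟩ T hT γ hmem hγ0 hgeo =>
    exists_ray_extension_of_dirac hp1.le hT hmem (hγ0.trans hx) hgeo, fun H => ?_⟩
  have := hμ.1
  obtain ⟨x, hx⟩ := (memWp_iff_exists_wassersteinDist_dirac_ne_top hp1.le μ).1 hμ
  rcases eq_zero_or_pos (wassersteinDist p (Measure.dirac x) μ) with h0 | hpos
  · exact ⟨x, eq_dirac_of_wassersteinDist_dirac_eq_zero hp1.le h0⟩
  set L := (wassersteinDist p (Measure.dirac x) μ).toReal
  have hL : 0 < L := ENNReal.toReal_pos hpos.ne' hx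
  have hμL := (ENNReal.ofReal_toReal hx).symm
  obtain ⟨γ', hmem', hgeo', hext⟩ := H L hL (fun t => μ.map (AffineMap.homothety x ((L - t) / L)))
    (fun t _ => memWp_map_homothety hp1.le hx _) (by simp [hL.ne'])
    (isWassersteinGeodesicOn_map_homothety_segment hp1.le hL hμL)
  obtain ⟨y, hy⟩ := exists_eq_dirac_of_isWassersteinGeodesicOn_Ici hp1
    (fun t ht => (hmem' t ht).1) hgeo' hL (x := x) (by
      rw [hext L ⟨hL.le, le_rfl⟩, sub_self, zero_div, AffineMap.homothety_zero]
      exact (Measure.map_const μ x).trans (by simp))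
  exact ⟨y, by rw [← hy, hext 0 ⟨le_rfl, hL.le⟩]; simp [hL.ne']⟩

/-- for `1 < p < ∞` and `dim E ≥ 2`, a measure `μ ∈ W_p(E)` is a Dirac measure
iff every geodesic segment issued from `μ` extends to a geodesic ray. -/
theorem dirac_iff_geodesics_extend
    {E : Type*} [NormedAddCommGroup E] [InnerProductSpace ℝ E] [CompleteSpace E]
    [SecondCountableTopology E] [MeasurableSpace E] [BorelSpace E]
    (hdim : 2 ≤ Module.rank ℝ E)
    (p : ℝ) (hp1 : 1 < p)
    (μ : Measure E) (hμ : MemWp p μ) :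
    (∃ x : E, μ = Measure.dirac x) ↔
      (∀ T : ℝ, 0 < T → ∀ γ : ℝ → Measure E,
        (∀ t ∈ Set.Icc (0:ℝ) T, MemWp p (γ t)) →
        γ 0 = μ →
        (∀ s ∈ Set.Icc (0:ℝ) T, ∀ t ∈ Set.Icc (0:ℝ) T,
          wassersteinDist p (γ s) (γ t) = ENNReal.ofReal |s - t|) →
        ∃ γ' : ℝ → Measure E,
          (∀ t : ℝ, 0 ≤ t → MemWp p (γ' t)) ∧
          (∀ s : ℝ, 0 ≤ s → ∀ t : ℝ, 0 ≤ t →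
            wassersteinDist p (γ' s) (γ' t) = ENNReal.ofReal |s - t|) ∧
          (∀ t ∈ Set.Icc (0:ℝ) T, γ' t = γ t)) :=
  dirac_iff_geodesics_extend_general p hp1 μ hμ
end
end

section
/- Let E be a separable real Hilbert space, 0 < p < ∞, μ ∈ W_p(E), x ∈ E with x ≠ 0, and a, b ∈ ℝ with a ≠ b. For α ∈ [0,1] let ζ_{a,b}^α(x) = α·δ_{ax} + (1−α)·δ_{bx}, and set m = min{ d_{W_p}(μ, ζ_{a,b}^α(x)) : α ∈ [0,1] }. Then μ(B(ax,bx)) = max{α ∈ [0,1] : d_{W_p}(μ, ζ_{a,b}^α(x)) = m} − min{α ∈ [0,1] : d_{W_p}(μ, ζ_{a,b}^α(x)) = m}, where B(u,v) = {z ∈ E : ‖u−z‖ = ‖v−z‖} is the bisector of u and v. -/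
/-!
A coupling of `μ` with `α δ_u + (1 - α) δ_v` is the same as a splitting `μ = ν₁ + ν₂` with
`ν₁` of mass `α` sent to `u` and `ν₂` sent to `v`, so the optimal transport cost is the least
value of `∫ g dν₁ + ∫ h dν₂`, where `g = d(·, u)^p` and `h = d(·, v)^p`. This is always at least
`∫ min g h dμ`, with equality exactly when `ν₁` can take all of `{g < h}`, none of `{h < g}` and
any part of the bisector `{g = h}`, i.e. when `μ {g < h} ≤ α ≤ μ {g ≤ h}`. For `α` outside this
interval a fixed amount of mass pays at least `1/n` more than `min g h`, so the cost is strictly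
larger. The minimisers therefore form an interval whose length is the mass of the bisector.
-/

open MeasureTheory ENNReal Topology Filter
open scoped RealInnerProductSpace

noncomputable section

open Set

section Transport

variable {X : Type*} [MeasurableSpace X]

def transportCost (c : X → X → ℝ≥0∞) (μ ν : Measure X) : ℝ≥0∞ :=
  ⨅ π ∈ {π : Measure (X × X) | π.map Prod.fst = μ ∧ π.map Prod.snd = ν}, ∫⁻ z, c z.1 z.2 ∂π

theorem wassersteinDist_eq_transportCost [PseudoEMetricSpace X] (p : ℝ) (μ ν : Measure X) :
    wassersteinDist p μ ν = transportCost (fun x y ↦ edist x y ^ p) μ ν ^ min p⁻¹ 1 :=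
  rfl

def twoPoint (u v : X) (α : ℝ) : Measure X :=
  ENNReal.ofReal α • Measure.dirac u + ENNReal.ofReal (1 - α) • Measure.dirac v

def splitCost (μ : Measure X) (g h : X → ℝ≥0∞) (a : ℝ≥0∞) : ℝ≥0∞ :=
  ⨅ ν ∈ {ν : Measure X × Measure X | ν.1 + ν.2 = μ ∧ ν.1 univ = a},
    ∫⁻ z, g z ∂ν.1 + ∫⁻ z, h z ∂ν.2

variable [MeasurableSingletonClass X] {c : X → X → ℝ≥0∞} {μ : Measure X} {u v : X} {α : ℝ}

theorem splitCost_le_lintegral_of_coupling (huv : u ≠ v) {π : Measure (X × X)}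
    (hfst : π.map Prod.fst = μ) (hsnd : π.map Prod.snd = twoPoint u v α) :
    splitCost μ (c · u) (c · v) (ENNReal.ofReal α) ≤ ∫⁻ z, c z.1 z.2 ∂π := by
  have hmeas (w : X) : MeasurableSet (Prod.snd ⁻¹' {w} : Set (X × X)) :=
    measurable_snd (measurableSet_singleton w)
  have hπ : π = π.restrict (Prod.snd ⁻¹' {u}) + π.restrict (Prod.snd ⁻¹' {v}) := by
    have hnull : π (Prod.snd ⁻¹' {u, v})ᶜ = 0 := by
      rw [← preimage_compl, ← Measure.map_apply measurable_snd
        ((measurableSet_singleton v).insert u).compl, hsnd]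
      simp [twoPoint, huv]
    rw [← Measure.restrict_union ((disjoint_singleton.2 huv).preimage Prod.snd) (hmeas v),
      ← preimage_union,
      Measure.restrict_eq_self_of_ae_mem (measure_eq_zero_iff_ae_notMem.1 hnull |>.mono
      fun z hz ↦ by simp at hz ⊢; tauto)]
  set ν₁ := (π.restrict (Prod.snd ⁻¹' {u})).map Prod.fst
  set ν₂ := (π.restrict (Prod.snd ⁻¹' {v})).map Prod.fst
  have hsum : ν₁ + ν₂ = μ := by
    rw [← Measure.map_add _ _ measurable_fst, ← hπ, hfst]
  have hmass : ν₁ univ = ENNReal.ofReal α := by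
    rw [Measure.map_apply measurable_fst MeasurableSet.univ, preimage_univ,
      Measure.restrict_apply_univ, ← Measure.map_apply measurable_snd (measurableSet_singleton u),
      hsnd]
    simp [twoPoint, huv.symm]
  have hcost (w : X) : ∫⁻ z, c z w ∂(π.restrict (Prod.snd ⁻¹' {w})).map Prod.fst
      ≤ ∫⁻ z in Prod.snd ⁻¹' {w}, c z.1 z.2 ∂π :=
    (lintegral_map_le _ _).trans_eq <| setLIntegral_congr_fun (hmeas w) fun z hz ↦ by rw [← hz]
  calc splitCost μ (c · u) (c · v) (ENNReal.ofReal α)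
      ≤ ∫⁻ z, c z u ∂ν₁ + ∫⁻ z, c z v ∂ν₂ := iInf₂_le (ν₁, ν₂) ⟨hsum, hmass⟩
    _ ≤ ∫⁻ z, c z.1 z.2 ∂π := by
      rw [hπ, lintegral_add_measure]; exact add_le_add (hcost u) (hcost v)

theorem transportCost_twoPoint_le_of_split [IsProbabilityMeasure μ] (hα : 0 ≤ α)
    {ν₁ ν₂ : Measure X} (hsum : ν₁ + ν₂ = μ) (hmass : ν₁ univ = ENNReal.ofReal α) :
    transportCost c μ (twoPoint u v α) ≤ ∫⁻ z, c z u ∂ν₁ + ∫⁻ z, c z v ∂ν₂ := by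
  have hmass₂ : ν₂ univ = ENNReal.ofReal (1 - α) := by
    have h1 : ENNReal.ofReal α + ν₂ univ = 1 := by
      rw [← hmass, ← Measure.add_apply, hsum, measure_univ]
    rw [ENNReal.ofReal_sub _ hα, ENNReal.ofReal_one, ← h1,
      ENNReal.add_sub_cancel_left ofReal_ne_top]
  have hu := measurableEmbedding_prod_mk_right (β := X) u
  have hv := measurableEmbedding_prod_mk_right (β := X) v
  refine iInf₂_le_of_le (ν₁.map (·, u) + ν₂.map (·, v)) ⟨?_, ?_⟩ ?_
  · rw [Measure.map_add _ _ measurable_fst, Measure.map_map measurable_fst hu.measurable,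
      Measure.map_map measurable_fst hv.measurable]
    exact (congr_arg₂ _ ν₁.map_id ν₂.map_id).trans hsum
  · rw [Measure.map_add _ _ measurable_snd, Measure.map_map measurable_snd hu.measurable,
      Measure.map_map measurable_snd hv.measurable]
    simp only [Function.comp_def, Measure.map_const, hmass, hmass₂, twoPoint]
  · rw [lintegral_add_measure, hu.lintegral_map, hv.lintegral_map]

theorem transportCost_twoPoint [IsProbabilityMeasure μ] (huv : u ≠ v) (hα : 0 ≤ α) :
    transportCost c μ (twoPoint u v α) = splitCost μ (c · u) (c · v) (ENNReal.ofReal α) :=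
  le_antisymm (le_iInf₂ fun _ hν ↦ transportCost_twoPoint_le_of_split hα hν.1 hν.2)
    (le_iInf₂ fun _ hπ ↦ splitCost_le_lintegral_of_coupling huv hπ.1 hπ.2)

end Transport

theorem ENNReal.exists_le_one_add_mul_eq {x y a : ℝ≥0∞} (hx : x ≤ a) (ha : a ≤ x + y)
    (hy : y ≠ ⊤) : ∃ w ≤ 1, x + w * y = a := by
  rcases eq_or_ne y 0 with rfl | hy₀
  · exact ⟨0, zero_le_one, by simpa using le_antisymm hx (by simpa using ha)⟩
  · refine ⟨(a - x) / y, ?_, ?_⟩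
    · rw [ENNReal.div_le_iff hy₀ hy, one_mul]
      exact tsub_le_iff_left.2 ha
    · rw [ENNReal.div_mul_cancel hy₀ hy, add_tsub_cancel_of_le hx]

theorem ENNReal.toReal_rpow_eq_toReal_rpow_iff {s t : ℝ≥0∞} {θ : ℝ} (hθ : 0 < θ) (hs : s ≠ ⊤)
    (ht : t ≠ ⊤) : (s ^ θ).toReal = (t ^ θ).toReal ↔ s = t := by
  rw [ENNReal.toReal_eq_toReal_iff' (ENNReal.rpow_ne_top_of_nonneg hθ.le hs)
    (ENNReal.rpow_ne_top_of_nonneg hθ.le ht), (ENNReal.rpow_left_injective hθ.ne').eq_iff]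

theorem setOf_mem_and_eq_sInf_image_eq {ι β : Type*} [ConditionallyCompleteLattice β]
    {φ : ι → β} {S T : Set ι} {c : β} (hlow : ∀ α ∈ S, c ≤ φ α)
    (heq : ∀ α ∈ S, φ α = c ↔ α ∈ T) (hT : T.Nonempty) (hTS : T ⊆ S) :
    {α | α ∈ S ∧ φ α = sInf (φ '' S)} = T := by
  obtain ⟨t, ht⟩ := hT
  have hc : sInf (φ '' S) = c :=
    IsLeast.csInf_eq ⟨⟨t, hTS ht, (heq t (hTS ht)).2 ht⟩, forall_mem_image.2 hlow⟩
  rw [hc]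
  exact Subset.antisymm (fun α ⟨hS, hα⟩ ↦ (heq α hS).1 hα)
    fun α hα ↦ ⟨hTS hα, (heq α (hTS hα)).2 hα⟩

section Split

variable {X : Type*} [MeasurableSpace X] {μ : Measure X} {g h : X → ℝ≥0∞} {a : ℝ≥0∞}

theorem measure_setOf_le_eq_add (hg : Measurable g) (hh : Measurable h) :
    μ {z | g z ≤ h z} = μ {z | g z < h z} + μ {z | g z = h z} := by
  have hunion : {z | g z ≤ h z} = {z | g z < h z} ∪ {z | g z = h z} := by
    ext; simp [le_iff_lt_or_eq]
  have hdisj : Disjoint {z | g z < h z} {z | g z = h z} :=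
    disjoint_left.2 fun _ hlt ↦ ne_of_lt hlt
  rw [hunion, measure_union hdisj (measurableSet_eq_fun hg hh)]

theorem exists_lt_measure_setOf_inv_natCast_le {f : X → ℝ≥0∞} (ha : a < μ {z | 0 < f z}) :
    ∃ n : ℕ, a < μ {z | (n : ℝ≥0∞)⁻¹ ≤ f z} := by
  have hmono : Monotone fun n : ℕ ↦ {z | (n : ℝ≥0∞)⁻¹ ≤ f z} := fun m n hmn z hz ↦
    le_trans (ENNReal.inv_le_inv.2 (Nat.cast_le.2 hmn)) hz
  have hunion : ⋃ n : ℕ, {z | (n : ℝ≥0∞)⁻¹ ≤ f z} = {z | 0 < f z} := by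
    ext z
    simp only [mem_iUnion]
    exact ⟨fun ⟨n, hn⟩ ↦ (ENNReal.inv_pos.2 (ENNReal.natCast_ne_top n)).trans_le hn,
      fun hz ↦ (ENNReal.exists_inv_nat_lt hz.ne').imp fun _ ↦ le_of_lt⟩
  rwa [← hunion, hmono.measure_iUnion, lt_iSup_iff] at ha

theorem lintegral_min_le_splitCost : ∫⁻ z, min (g z) (h z) ∂μ ≤ splitCost μ g h a :=
  le_iInf₂ fun ν hν ↦ calc
    ∫⁻ z, min (g z) (h z) ∂μ = ∫⁻ z, min (g z) (h z) ∂ν.1 + ∫⁻ z, min (g z) (h z) ∂ν.2 := by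
      rw [← lintegral_add_measure, hν.1]
    _ ≤ ∫⁻ z, g z ∂ν.1 + ∫⁻ z, h z ∂ν.2 :=
      add_le_add (lintegral_mono fun _ ↦ min_le_left _ _) (lintegral_mono fun _ ↦ min_le_right _ _)

theorem splitCost_swap_le [IsFiniteMeasure μ] :
    splitCost μ h g (μ univ - a) ≤ splitCost μ g h a := by
  refine le_iInf₂ fun ν ⟨hsum, hmass⟩ ↦ iInf₂_le_of_le (ν.2, ν.1) ⟨(add_comm _ _).trans hsum, ?_⟩
    (add_comm _ _).le
  have hfin : ν.1 univ ≠ ⊤ :=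
    ne_top_of_le_ne_top (measure_ne_top μ univ) (hsum ▸ Measure.le_add_right le_rfl univ)
  rw [← hsum, Measure.add_apply, ← hmass, ENNReal.add_sub_cancel_left hfin]

theorem splitCost_ne_top [IsProbabilityMeasure μ] (ha : a ≤ 1) (hg : ∫⁻ z, g z ∂μ ≠ ⊤)
    (hh : ∫⁻ z, h z ∂μ ≠ ⊤) : splitCost μ g h a ≠ ⊤ := by
  refine ne_top_of_le_ne_top ?_ (iInf₂_le (a • μ, (1 - a) • μ) ⟨?_, ?_⟩)
  · rw [lintegral_smul_measure, lintegral_smul_measure]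
    exact ENNReal.add_ne_top.2 ⟨ENNReal.mul_ne_top (ne_top_of_le_ne_top one_ne_top ha) hg,
      ENNReal.mul_ne_top (ENNReal.sub_ne_top one_ne_top) hh⟩
  · rw [← add_smul, add_tsub_cancel_of_le ha, one_smul]
  · simp

theorem splitCost_le_lintegral_min [IsFiniteMeasure μ] (hg : Measurable g) (hh : Measurable h)
    (h₀ : μ {z | g z < h z} ≤ a) (h₁ : a ≤ μ {z | g z ≤ h z}) :
    splitCost μ g h a ≤ ∫⁻ z, min (g z) (h z) ∂μ := by
  obtain ⟨w, hw₁, hw⟩ := ENNReal.exists_le_one_add_mul_eq h₀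
    (h₁.trans (measure_setOf_le_eq_add hg hh).le) (measure_ne_top μ _)
  have hL : MeasurableSet {z | g z < h z} := measurableSet_lt hg hh
  have hQ : MeasurableSet {z | g z = h z} := measurableSet_eq_fun hg hh
  -- send all of `{g < h}` and the fraction `w` of `{g = h}` to the `g` side
  set φ : X → ℝ≥0∞ :=
    {z | g z < h z}.indicator (fun _ ↦ 1) + {z | g z = h z}.indicator fun _ ↦ w
  have hφ : Measurable φ := (measurable_const.indicator hL).add (measurable_const.indicator hQ)
  have hφ₁ (z : X) : φ z ≤ 1 := by
    rcases lt_trichotomy (g z) (h z) with hlt | heq | hgt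
    · simp [φ, hlt, hlt.ne]
    · simp [φ, heq, hw₁]
    · simp [φ, hgt.not_gt, hgt.ne']
  have hmin (z : X) : φ z * g z + (1 - φ z) * h z = min (g z) (h z) := by
    rcases lt_trichotomy (g z) (h z) with hlt | heq | hgt
    · simp [φ, hlt, hlt.ne, hlt.le]
    · simp [φ, heq, ← add_mul, add_tsub_cancel_of_le hw₁]
    · simp [φ, hgt.not_gt, hgt.ne', hgt.le]
  refine iInf₂_le_of_le (μ.withDensity φ, μ.withDensity (1 - φ)) ⟨?_, ?_⟩ ?_
  · rw [← withDensity_add_left hφ, add_tsub_cancel_of_le hφ₁, withDensity_one]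
  · rw [withDensity_apply _ MeasurableSet.univ, Measure.restrict_univ]
    simp only [φ, Pi.add_apply]
    rw [lintegral_add_left (measurable_const.indicator hL), lintegral_indicator_const hL,
      lintegral_indicator_const hQ, one_mul, hw]
  · dsimp only
    rw [lintegral_withDensity_eq_lintegral_mul _ hφ hg,
      lintegral_withDensity_eq_lintegral_mul _ (measurable_one.sub hφ) hh,
      ← lintegral_add_left (hφ.mul hg)]
    exact (lintegral_congr hmin).le

theorem lintegral_min_lt_splitCost (hg : Measurable g) (hh : Measurable h)
    (hM : ∫⁻ z, min (g z) (h z) ∂μ ≠ ⊤) (ha : a < μ {z | g z < h z}) :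
    ∫⁻ z, min (g z) (h z) ∂μ < splitCost μ g h a := by
  rw [show {z | g z < h z} = {z | 0 < h z - g z} by simp] at ha
  obtain ⟨n, hn⟩ := exists_lt_measure_setOf_inv_natCast_le ha
  set A := {z | (n : ℝ≥0∞)⁻¹ ≤ h z - g z}
  have hε : (n : ℝ≥0∞)⁻¹ * (μ A - a) ≠ 0 :=
    mul_ne_zero (ENNReal.inv_ne_zero.2 (ENNReal.natCast_ne_top n)) (tsub_pos_of_lt hn).ne'
  refine (ENNReal.lt_add_right hM hε).trans_le (le_iInf₂ fun ν ⟨hsum, hmass⟩ ↦ ?_)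
  -- whatever the split, mass `μ A - a` of `A` pays `h`, which exceeds `min g h` by `n⁻¹` there
  have hA : μ A - a ≤ ν.2 A := by
    rw [tsub_le_iff_left, ← hsum, Measure.add_apply, ← hmass]
    gcongr
    exact subset_univ A
  have hsplit : ∫⁻ z, min (g z) (h z) ∂μ
      = ∫⁻ z, min (g z) (h z) ∂ν.1 + ∫⁻ z, min (g z) (h z) ∂ν.2 := by
    rw [← lintegral_add_measure, hsum]
  calc ∫⁻ z, min (g z) (h z) ∂μ + (n : ℝ≥0∞)⁻¹ * (μ A - a)
      ≤ ∫⁻ z, min (g z) (h z) ∂ν.1 + (∫⁻ z, min (g z) (h z) ∂ν.2 + ∫⁻ z, h z - g z ∂ν.2) := by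
        rw [hsplit, add_assoc]
        gcongr
        exact (mul_le_mul' le_rfl hA).trans (mul_meas_ge_le_lintegral (hh.sub hg) _)
    _ = ∫⁻ z, min (g z) (h z) ∂ν.1 + ∫⁻ z, h z ∂ν.2 := by
        rw [← lintegral_add_left (hg.min hh)]
        simp_rw [min_comm (g _), add_comm (min _ _), tsub_add_min]
    _ ≤ ∫⁻ z, g z ∂ν.1 + ∫⁻ z, h z ∂ν.2 := by
        gcongr with z
        exact min_le_left _ _

theorem splitCost_eq_lintegral_min_iff [IsProbabilityMeasure μ] (hg : Measurable g)
    (hh : Measurable h) (hM : ∫⁻ z, min (g z) (h z) ∂μ ≠ ⊤) (ha : a ≤ 1) :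
    splitCost μ g h a = ∫⁻ z, min (g z) (h z) ∂μ ↔
      μ {z | g z < h z} ≤ a ∧ a ≤ μ {z | g z ≤ h z} := by
  refine ⟨fun heq ↦ ⟨le_of_not_gt fun hlt ↦ (lintegral_min_lt_splitCost hg hh hM hlt).ne' heq,
    le_of_not_gt fun hlt ↦ ?_⟩, fun ⟨h₀, h₁⟩ ↦
      le_antisymm (splitCost_le_lintegral_min hg hh h₀ h₁) lintegral_min_le_splitCost⟩
  have hcompl : μ {z | h z < g z} = 1 - μ {z | g z ≤ h z} := by
    simp_rw [← not_le]
    exact prob_compl_eq_one_sub (measurableSet_le hg hh)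
  have hlt' : μ univ - a < μ {z | h z < g z} := by
    rw [hcompl, measure_univ]
    exact (ENNReal.cancel_of_ne one_ne_top).tsub_lt_tsub_iff_left_of_le
      (ENNReal.cancel_of_ne (ne_top_of_le_ne_top one_ne_top ha)) ha |>.2 hlt
  simp_rw [min_comm (g _)] at hM heq
  exact ((lintegral_min_lt_splitCost hh hg hM hlt').trans_le splitCost_swap_le).ne' heq

theorem splitCost_rpow_argmin_eq_Icc [IsProbabilityMeasure μ] (hg : Measurable g)
    (hh : Measurable h) (hg_fin : ∫⁻ z, g z ∂μ ≠ ⊤) (hh_fin : ∫⁻ z, h z ∂μ ≠ ⊤) {θ : ℝ}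
    (hθ : 0 < θ) {φ : ℝ → ℝ}
    (hφ : ∀ α ∈ Icc (0 : ℝ) 1, φ α = (splitCost μ g h (ENNReal.ofReal α) ^ θ).toReal) :
    {α | α ∈ Icc (0 : ℝ) 1 ∧ φ α = sInf (φ '' Icc 0 1)}
      = Icc (μ {z | g z < h z}).toReal (μ {z | g z ≤ h z}).toReal := by
  have hM : ∫⁻ z, min (g z) (h z) ∂μ ≠ ⊤ :=
    ne_top_of_le_ne_top hg_fin (lintegral_mono fun _ ↦ min_le_left _ _)
  have hfin (α : ℝ) (hα : α ∈ Icc (0 : ℝ) 1) : splitCost μ g h (ENNReal.ofReal α) ≠ ⊤ :=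
    splitCost_ne_top (ENNReal.ofReal_le_one.2 hα.2) hg_fin hh_fin
  have hle : (μ {z | g z < h z}).toReal ≤ (μ {z | g z ≤ h z}).toReal :=
    ENNReal.toReal_mono (measure_ne_top _ _)
      (measure_mono (ofPred_subset_ofPred_of_imp fun _ ↦ le_of_lt))
  refine setOf_mem_and_eq_sInf_image_eq (c := ((∫⁻ z, min (g z) (h z) ∂μ) ^ θ).toReal)
    (fun α hα ↦ ?_) (fun α hα ↦ ?_) (nonempty_Icc.2 hle) ?_
  · rw [hφ α hα]
    exact ENNReal.toReal_mono (ENNReal.rpow_ne_top_of_nonneg hθ.le (hfin α hα))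
      (ENNReal.rpow_le_rpow lintegral_min_le_splitCost hθ.le)
  · rw [hφ α hα, ENNReal.toReal_rpow_eq_toReal_rpow_iff hθ (hfin α hα) hM,
      splitCost_eq_lintegral_min_iff hg hh hM (ENNReal.ofReal_le_one.2 hα.2),
      ENNReal.le_ofReal_iff_toReal_le (measure_ne_top _ _) hα.1,
      ENNReal.ofReal_le_iff_le_toReal (measure_ne_top _ _), mem_Icc]
  · exact Icc_subset_Icc ENNReal.toReal_nonneg
      (ENNReal.toReal_le_of_le_ofReal zero_le_one (by simpa using prob_le_one))

end Split

theorem lintegral_edist_rpow_ne_top {X : Type*} [PseudoMetricSpace X] [MeasurableSpace X]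
    {μ : Measure X} [IsFiniteMeasure μ] {p : ℝ} (hp : 0 ≤ p) {x₀ : X}
    (h : ∫⁻ z, edist z x₀ ^ p ∂μ ≠ ⊤) (w : X) : ∫⁻ z, edist z w ^ p ∂μ ≠ ⊤ := by
  have hle (z : X) : edist z w ^ p ≤ 2 ^ p * (edist z x₀ ^ p + edist x₀ w ^ p) :=
    (ENNReal.rpow_le_rpow (edist_triangle z x₀ w) hp).trans
      (ENNReal.add_rpow_le_two_rpow_mul_rpow_add_rpow _ _ hp)
  have h₂ : (2 : ℝ≥0∞) ^ p ≠ ⊤ := ENNReal.rpow_ne_top_of_nonneg hp ENNReal.ofNat_ne_top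
  refine ne_top_of_le_ne_top ?_ (lintegral_mono hle)
  rw [lintegral_const_mul' _ _ h₂, lintegral_add_right _ measurable_const, lintegral_const]
  exact ENNReal.mul_ne_top h₂ (ENNReal.add_ne_top.2 ⟨h, ENNReal.mul_ne_top
    (ENNReal.rpow_ne_top_of_nonneg hp (edist_ne_top _ _)) (measure_ne_top _ _)⟩)

theorem setOf_norm_sub_eq_norm_sub {E : Type*} [SeminormedAddCommGroup E] {p : ℝ} (hp : p ≠ 0)
    (u v : E) : {z : E | ‖u - z‖ = ‖v - z‖} = {z | edist z u ^ p = edist z v ^ p} := by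
  ext z
  rw [mem_ofPred_eq, mem_ofPred_eq, (ENNReal.rpow_left_injective hp).eq_iff, edist_dist,
    edist_dist, ENNReal.ofReal_eq_ofReal_iff dist_nonneg dist_nonneg, dist_eq_norm', dist_eq_norm']

theorem measure_of_bisector_general
    {E : Type*} [NormedAddCommGroup E] [InnerProductSpace ℝ E]
    [MeasurableSpace E] [BorelSpace E]
    (p : ℝ) (hp : 0 < p)
    (μ : Measure E) (hμ : MemWp p μ)
    (x : E) (hx : x ≠ 0) (a b : ℝ) (hab : a ≠ b)
    (dW : ℝ → ℝ)
    (hdW : ∀ α : ℝ, dW α = (wassersteinDist p μ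
      (ENNReal.ofReal α • Measure.dirac (a • x)
        + ENNReal.ofReal (1 - α) • Measure.dirac (b • x))).toReal)
    (m : ℝ) (hm : m = sInf (dW '' Set.Icc (0:ℝ) 1)) :
    (μ {z : E | ‖a • x - z‖ = ‖b • x - z‖}).toReal
      = sSup {α : ℝ | α ∈ Set.Icc (0:ℝ) 1 ∧ dW α = m}
        - sInf {α : ℝ | α ∈ Set.Icc (0:ℝ) 1 ∧ dW α = m} := by
  obtain ⟨hprob, x₀, hmom⟩ := hμ
  set g : E → ℝ≥0∞ := fun z ↦ edist z (a • x) ^ p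
  set h : E → ℝ≥0∞ := fun z ↦ edist z (b • x) ^ p
  have hg : Measurable g := measurable_edist_left.pow_const p
  have hh : Measurable h := measurable_edist_left.pow_const p
  have hdW' (α : ℝ) (hα : α ∈ Icc (0 : ℝ) 1) :
      dW α = (splitCost μ g h (ENNReal.ofReal α) ^ min p⁻¹ 1).toReal := by
    rw [hdW, wassersteinDist_eq_transportCost, ← twoPoint,
      transportCost_twoPoint ((smul_left_injective ℝ hx).ne hab) hα.1]
  have hlt_le : (μ {z | g z < h z}).toReal
      ≤ (μ {z | g z < h z}).toReal + (μ {z | g z = h z}).toReal :=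
    le_add_of_nonneg_right ENNReal.toReal_nonneg
  rw [hm, splitCost_rpow_argmin_eq_Icc hg hh (lintegral_edist_rpow_ne_top hp.le hmom _)
      (lintegral_edist_rpow_ne_top hp.le hmom _) (lt_min (inv_pos.2 hp) one_pos) hdW',
    measure_setOf_le_eq_add hg hh, ENNReal.toReal_add (measure_ne_top _ _) (measure_ne_top _ _),
    csSup_Icc hlt_le, csInf_Icc hlt_le, add_sub_cancel_left, setOf_norm_sub_eq_norm_sub hp.ne']

/-- recovering the measure of the bisector `B(ax, bx)` from the Wasserstein
distances to the two-point measures `ζ_{a,b}^α(x) = α δ_{ax} + (1-α) δ_{bx}`. -/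
theorem measure_of_bisector
    {E : Type*} [NormedAddCommGroup E] [InnerProductSpace ℝ E] [CompleteSpace E]
    [SecondCountableTopology E] [MeasurableSpace E] [BorelSpace E]
    (p : ℝ) (hp : 0 < p)
    (μ : Measure E) (hμ : MemWp p μ)
    (x : E) (hx : x ≠ 0) (a b : ℝ) (hab : a ≠ b)
    (dW : ℝ → ℝ)
    (hdW : ∀ α : ℝ, dW α = (wassersteinDist p μ
      (ENNReal.ofReal α • Measure.dirac (a • x)
        + ENNReal.ofReal (1 - α) • Measure.dirac (b • x))).toReal)
    (m : ℝ) (hm : m = sInf (dW '' Set.Icc (0:ℝ) 1)) :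
    (μ {z : E | ‖a • x - z‖ = ‖b • x - z‖}).toReal
      = sSup {α : ℝ | α ∈ Set.Icc (0:ℝ) 1 ∧ dW α = m}
        - sInf {α : ℝ | α ∈ Set.Icc (0:ℝ) 1 ∧ dW α = m} :=
  measure_of_bisector_general p hp μ hμ x hx a b hab dW hdW m hm
end
end
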